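/- Let f : U → V and g : V → W be linear maps of vector spaces over a field such that f and g each have finite-dimensional kernel and cokernel. Then g ∘ f has finite-dimensional kernel and cokernel, and ind(g ∘ f) = ind(f) + ind(g), where ind T := dim ker T − dim coker T. -/

import Mathlib

open LinearMap

/-- **Composition of Fredholm-type maps: additivity of the index.**
If `f : U → V` and `g : V → W` have finite-dimensional kernel and cokernel, then so does
`g ∘ f`, and `ind (g ∘ f) = ind f + ind g`, where `ind T = dim ker T − dim coker T`. -/
theorem index_additive_under_composition
    {K : Type} [Field K]
    {U V W : Type}
    [AddCommGroup U] [Module K U] [AddCommGroup V] [Module K V]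
    [AddCommGroup W] [Module K W]
    (f : U →ₗ[K] V) (g : V →ₗ[K] W)
    (hkerf : FiniteDimensional K (LinearMap.ker f))
    (hcokerf : FiniteDimensional K (V ⧸ LinearMap.range f))
    (hkerg : FiniteDimensional K (LinearMap.ker g))
    (hcokerg : FiniteDimensional K (W ⧸ LinearMap.range g)) :
    FiniteDimensional K (LinearMap.ker (g.comp f)) ∧
    FiniteDimensional K (W ⧸ LinearMap.range (g.comp f)) ∧
    (Module.finrank K (LinearMap.ker (g.comp f)) : ℤ) -
        (Module.finrank K (W ⧸ LinearMap.range (g.comp f)) : ℤ) =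
      ((Module.finrank K (LinearMap.ker f) : ℤ) -
          (Module.finrank K (V ⧸ LinearMap.range f) : ℤ)) +
        ((Module.finrank K (LinearMap.ker g) : ℤ) -
          (Module.finrank K (W ⧸ LinearMap.range g) : ℤ)) := by
  have hker : FiniteDimensional K (ker (g ∘ₗ f)) := by rw [ker_comp]; infer_instance
  have hcoker : FiniteDimensional K (W ⧸ range (g ∘ₗ f)) := by rw [range_comp]; infer_instance
  have hindex := index_comp (f := f) g
  simp only [index_eq_finrank_sub] at hindex
  exact ⟨hker, hcoker, by rw [hindex, add_comm]⟩
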